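/- Let n ≥ 1, let m ≥ 2 be even, let K be a totally real algebraic extension of ℚ, let O be an order in K, let f ∈ K[x₁,…,xₙ] be a totally positive definite homogeneous polynomial of degree m, let Λ ⊆ Kⁿ be a finitely generated O-submodule with f(v) ∈ O for all v ∈ Λ, and let α ∈ O^+. If O^+ has the Northcott property, then the set {v ∈ Λ : f(v) = α} is finite. -/

import Mathlib

open MvPolynomial

/-- The house of an algebraic number `α`: the maximum of `|σ(α)|` over the
embeddings `σ` into `ℂ`. -/
noncomputable def house' {K : Type*} [Field K] (α : K) : ℝ :=
  ⨆ σ : K →+* ℂ, ‖σ α‖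

/-- A set `S` of elements of a field of algebraic numbers has the Northcott
property (with respect to the house) if for every real `c > 0` the set of
elements of `S` of house less than `c` is finite. -/
def HasNorthcott {K : Type*} [Field K] (S : Set K) : Prop :=
  ∀ c : ℝ, 0 < c → {α : K | α ∈ S ∧ house' α < c}.Finite

/-!
For `v` with `f(v) = α` and a real embedding `τ`, positive definiteness and homogeneity give
`δ ‖τ(v)‖ ^ m ≤ τ(f)(τ(v)) = τ(α) ≤ house'(α)`. Only finitely many real forms `τ(f)` occur, so
one `δ > 0` works for every `τ`; as `K` is totally real, every conjugate of a coordinate of `v`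
is some `τ(v i)`, so these are uniformly bounded. A common denominator `d` of the finitely
generated module `Λ` puts `d v` into `Oⁿ` with bounded house, and Northcott for `O⁺` implies
Northcott for `O` via `x ↦ x ^ 2 + 1`.
-/

section House

variable {K : Type*} [Field K]

theorem house'_nonneg (x : K) : 0 ≤ house' x :=
  Real.iSup_nonneg fun _ => norm_nonneg _

variable [CharZero K] [Algebra.IsAlgebraic ℚ K]

theorem finite_range_ringHom_apply {L : Type*} [Field L] [CharZero L] (x : K) :
    (Set.range fun σ : K →+* L => σ x).Finite := by
  refine ((minpoly ℚ x).rootSet_finite L).subset ?_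
  rintro _ ⟨σ, rfl⟩
  have hx : IsIntegral ℚ x := (Algebra.IsAlgebraic.isAlgebraic x).isIntegral
  exact Polynomial.mem_rootSet.2 ⟨minpoly.ne_zero hx, minpoly.aeval_algHom ℚ σ.toRatAlgHom x⟩

theorem norm_le_house' (σ : K →+* ℂ) (x : K) : ‖σ x‖ ≤ house' x := by
  refine le_ciSup (f := fun σ : K →+* ℂ => ‖σ x‖) (Set.Finite.bddAbove ?_) σ
  simpa only [Set.range_comp'] using (finite_range_ringHom_apply (L := ℂ) x).image fun z : ℂ => ‖z‖

theorem house'_mul_le (x y : K) : house' (x * y) ≤ house' x * house' y :=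
  Real.iSup_le (fun σ => by
      rw [map_mul, norm_mul]
      exact mul_le_mul (norm_le_house' σ x) (norm_le_house' σ y) (norm_nonneg _)
        (house'_nonneg x))
    (mul_nonneg (house'_nonneg x) (house'_nonneg y))

end House

theorem HasNorthcott.finite_house'_le {K : Type*} [Field K] {S : Set K} (h : HasNorthcott S)
    (c : ℝ) : {x : K | x ∈ S ∧ house' x ≤ c}.Finite :=
  (h (max c 0 + 1) (by positivity)).subset fun _ ⟨hS, hx⟩ =>
    ⟨hS, hx.trans_lt (by linarith [le_max_left c 0])⟩

theorem finite_setOf_sq_eq {K : Type*} [Field K] (c : K) : {x : K | x ^ 2 = c}.Finite :=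
  (Polynomial.nthRoots 2 c).finite_toSet.subset fun x hx => by
    simpa [Polynomial.mem_nthRoots] using hx

theorem HasNorthcott.of_totallyPositive {K : Type*} [Field K] [CharZero K]
    [Algebra.IsAlgebraic ℚ K] (hK : ∀ σ : K →+* ℂ, ∀ x : K, (σ x).im = 0)
    (O : Subalgebra ℤ K) (h : HasNorthcott {x : K | x ∈ O ∧ ∀ σ : K →+* ℂ, 0 < (σ x).re}) :
    HasNorthcott (O : Set K) := by
  intro c _
  refine ((h.finite_house'_le (c ^ 2 + 1)).preimage' (f := fun x => x ^ 2 + 1)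
    fun b _ => ?_).subset ?_
  · simpa only [Set.preimage, Set.mem_singleton_iff, ← eq_sub_iff_add_eq]
      using finite_setOf_sq_eq (b - 1)
  rintro x ⟨hxO, hxc⟩
  refine ⟨⟨add_mem (pow_mem hxO 2) (one_mem O), fun σ => ?_⟩, Real.iSup_le (fun σ => ?_) ?_⟩
  · simp only [map_add, sq, map_mul, map_one, Complex.add_re, Complex.mul_re, hK σ x,
      mul_zero, sub_zero, Complex.one_re]
    exact add_pos_of_nonneg_of_pos (mul_self_nonneg _) one_pos
  · have hσx : ‖σ x‖ ≤ c := (norm_le_house' σ x).trans hxc.le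
    calc ‖σ (x ^ 2 + 1)‖ ≤ ‖σ x ^ 2‖ + ‖(1 : ℂ)‖ := by
          rw [map_add, map_pow, map_one]; exact norm_add_le _ _
      _ = ‖σ x‖ ^ 2 + 1 := by rw [norm_pow, norm_one]
      _ ≤ c ^ 2 + 1 := by gcongr
  · positivity

theorem MvPolynomial.IsHomogeneous.eval_smul {ι R : Type*} [CommSemiring R]
    {p : MvPolynomial ι R} {m : ℕ} (hp : p.IsHomogeneous m) (c : R) (x : ι → R) :
    eval (c • x) p = c ^ m * eval x p := by
  rw [eval_eq, eval_eq, Finset.mul_sum]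
  refine Finset.sum_congr rfl fun d hd => ?_
  have hdeg : ∑ i ∈ d.support, d i = m := by
    rw [← hp (mem_support_iff.mp hd), Finsupp.weight_apply, Finsupp.sum]
    simp
  simp only [Pi.smul_apply, smul_eq_mul, mul_pow, Finset.prod_mul_distrib,
    Finset.prod_pow_eq_pow_sum, hdeg]
  ring

theorem MvPolynomial.IsHomogeneous.exists_pos_mul_norm_pow_le {ι : Type*} [Fintype ι]
    {p : MvPolynomial ι ℝ} {m : ℕ} (hp : p.IsHomogeneous m)
    (hpos : ∀ x : ι → ℝ, x ≠ 0 → 0 < eval x p) :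
    ∃ δ > 0, ∀ x : ι → ℝ, x ≠ 0 → δ * ‖x‖ ^ m ≤ eval x p := by
  cases isEmpty_or_nonempty ι
  · exact ⟨1, one_pos, fun x hx => (hx (Subsingleton.elim x 0)).elim⟩
  obtain ⟨u, hu, hmin⟩ := (isCompact_sphere (0 : ι → ℝ) 1).exists_isMinOn
    (NormedSpace.sphere_nonempty.2 zero_le_one) (continuous_eval p).continuousOn
  have hu0 : u ≠ 0 := ne_zero_of_mem_sphere one_ne_zero ⟨u, hu⟩
  refine ⟨eval u p, hpos u hu0, fun x hx => ?_⟩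
  have hxn : 0 < ‖x‖ := norm_pos_iff.2 hx
  have hsphere : ‖x‖⁻¹ • x ∈ Metric.sphere (0 : ι → ℝ) 1 := by
    rw [mem_sphere_zero_iff_norm, norm_smul, norm_inv, norm_norm, inv_mul_cancel₀ hxn.ne']
  calc eval u p * ‖x‖ ^ m ≤ eval (‖x‖⁻¹ • x) p * ‖x‖ ^ m := by gcongr; exact hmin hsphere
    _ = eval x p := by
      rw [hp.eval_smul, inv_pow, mul_comm, ← mul_assoc, mul_inv_cancel₀ (by positivity), one_mul]

theorem exists_pos_mul_norm_pow_le_of_finite {ι : Type*} [Fintype ι]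
    {P : Set (MvPolynomial ι ℝ)} (hP : P.Finite) {m : ℕ} (hhom : ∀ p ∈ P, p.IsHomogeneous m)
    (hpos : ∀ p ∈ P, ∀ x : ι → ℝ, x ≠ 0 → 0 < eval x p) :
    ∃ δ > 0, ∀ p ∈ P, ∀ x : ι → ℝ, x ≠ 0 → δ * ‖x‖ ^ m ≤ eval x p := by
  have hsmall : ∀ᶠ δ in nhdsWithin (0 : ℝ) (Set.Ioi 0),
      ∀ p ∈ P, ∀ x : ι → ℝ, x ≠ 0 → δ * ‖x‖ ^ m ≤ eval x p := by
    refine hP.eventually_all.2 fun p hp => ?_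
    obtain ⟨δ, hδ, hbound⟩ := (hhom p hp).exists_pos_mul_norm_pow_le (hpos p hp)
    filter_upwards [Ioo_mem_nhdsGT hδ] with ε hε x hx
    exact (mul_le_mul_of_nonneg_right hε.2.le (by positivity)).trans (hbound x hx)
  obtain ⟨δ, hδ, hδpos⟩ := (hsmall.and self_mem_nhdsWithin).exists
  exact ⟨δ, hδpos, hδ⟩

theorem MvPolynomial.finite_range_map {ι σ R S : Type*} [CommSemiring R] [CommSemiring S]
    (g : ι → R →+* S) (p : MvPolynomial σ R) (h : ∀ c : R, (Set.range fun i => g i c).Finite) :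
    (Set.range fun i => map (g i) p).Finite := by
  have hcoeff : (Set.range fun i (d : p.support) => g i (coeff d p)).Finite :=
    (Set.Finite.pi fun d : p.support => h (coeff d p)).subset
      (by rintro _ ⟨i, rfl⟩ d _; exact ⟨i, rfl⟩)
  refine (hcoeff.image fun c => ∑ d : p.support, monomial d.1 (c d)).subset ?_
  rintro _ ⟨i, rfl⟩
  refine ⟨_, ⟨i, rfl⟩, ?_⟩
  change _ = map (g i) p
  conv_rhs => rw [p.as_sum, map_sum]
  simp only [map_monomial]
  exact Finset.sum_coe_sort p.support fun d => monomial d (g i (coeff d p))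

theorem exists_forall_house'_apply_le_of_eval_eq {K ι : Type*} [Field K] [CharZero K]
    [Algebra.IsAlgebraic ℚ K] [Fintype ι] (hK : ∀ σ : K →+* ℂ, ∀ x : K, (σ x).im = 0)
    (f : MvPolynomial ι K) {m : ℕ} (hm : m ≠ 0) (hf : f.IsHomogeneous m)
    (hpd : ∀ τ : K →+* ℝ, ∀ x : ι → ℝ, x ≠ 0 → 0 < eval x (map τ f)) (α : K) :
    ∃ C, ∀ v : ι → K, eval v f = α → ∀ i, house' (v i) ≤ C := by
  obtain ⟨δ, hδ, hbound⟩ := exists_pos_mul_norm_pow_le_of_finite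
    (f.finite_range_map (fun τ : K →+* ℝ => τ) finite_range_ringHom_apply)
    (by rintro _ ⟨τ, rfl⟩; exact hf.map τ) (by rintro _ ⟨τ, rfl⟩; exact hpd τ)
  refine ⟨max 1 (house' α / δ), fun v hv i => Real.iSup_le (fun σ => ?_) (by positivity)⟩
  have hσ : NumberField.ComplexEmbedding.IsReal σ :=
    NumberField.ComplexEmbedding.isReal_iff.2
      (RingHom.ext fun x => Complex.conj_eq_iff_im.2 (hK σ x))
  set τ := hσ.embedding
  set x : ι → ℝ := fun j => τ (v j)
  have hx : ‖x‖ ^ m ≤ house' α / δ := by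
    rcases eq_or_ne x 0 with hx0 | hx0
    · rw [hx0, norm_zero, zero_pow hm]
      exact div_nonneg (house'_nonneg α) hδ.le
    rw [le_div_iff₀' hδ]
    calc δ * ‖x‖ ^ m ≤ eval x (map τ f) := hbound _ ⟨τ, rfl⟩ x hx0
      _ = τ α := by rw [← hv, eval_map]; exact (hom_eval₂ f (RingHom.id K) τ v).symm
      _ ≤ ‖σ α‖ := by rw [← hσ.coe_embedding_apply, Complex.norm_real]; exact le_abs_self _
      _ ≤ house' α := norm_le_house' σ α
  have hxle : ‖x‖ ≤ max 1 (house' α / δ) := by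
    rcases le_or_gt ‖x‖ 1 with h1 | h1
    · exact le_max_of_le_left h1
    · exact le_max_of_le_right ((le_self_pow₀ h1.le hm).trans hx)
  calc ‖σ (v i)‖ = ‖x i‖ := by rw [← hσ.coe_embedding_apply, Complex.norm_real]
    _ ≤ max 1 (house' α / δ) := (norm_le_pi_norm x i).trans hxle

theorem exists_mul_mem_of_finset {K : Type*} [Field K] (O : Subalgebra ℤ K)
    (hO : ∀ x : K, ∃ a ∈ O, ∃ b ∈ O, b ≠ 0 ∧ x = a / b) (s : Finset K) :
    ∃ d ∈ O, d ≠ 0 ∧ ∀ x ∈ s, d * x ∈ O := by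
  classical
  induction s using Finset.induction_on with
  | empty => exact ⟨1, one_mem O, one_ne_zero, by simp⟩
  | insert x s _ ih =>
    obtain ⟨d, hdO, hd0, hds⟩ := ih
    obtain ⟨a, haO, b, hbO, hb0, rfl⟩ := hO x
    refine ⟨b * d, mul_mem hbO hdO, mul_ne_zero hb0 hd0, ?_⟩
    rintro y hy
    rcases Finset.mem_insert.1 hy with rfl | hy
    · rw [mul_comm b, mul_assoc, mul_div_cancel₀ a hb0]
      exact mul_mem hdO haO
    · rw [mul_assoc]
      exact mul_mem hbO (hds y hy)

theorem exists_mul_mem_of_fg {K ι : Type*} [Field K] [Finite ι] (O : Subalgebra ℤ K)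
    (hO : ∀ x : K, ∃ a ∈ O, ∃ b ∈ O, b ≠ 0 ∧ x = a / b) {Λ : Submodule O (ι → K)}
    (hΛ : Λ.FG) : ∃ d : K, d ≠ 0 ∧ ∀ v ∈ Λ, ∀ i, d * v i ∈ O := by
  classical
  have := Fintype.ofFinite ι
  obtain ⟨T, rfl⟩ := hΛ
  obtain ⟨d, -, hd0, hdT⟩ :=
    exists_mul_mem_of_finset O hO (T.biUnion fun w => Finset.univ.image w)
  refine ⟨d, hd0, fun v hv => ?_⟩
  induction hv using Submodule.span_induction with
  | mem w hw =>
    exact fun i => hdT _ (Finset.mem_biUnion.2 ⟨w, hw, Finset.mem_image_of_mem w (Finset.mem_univ i)⟩)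
  | zero => simp
  | add w w' _ _ hw hw' => exact fun i => by simpa [mul_add] using add_mem (hw i) (hw' i)
  | smul a w _ hw =>
    intro i
    change d * (a * w i) ∈ O
    rw [mul_left_comm]
    exact mul_mem a.2 (hw i)

theorem finitely_many_representations_of_northcott_general
    (n m : ℕ) (hm : 2 ≤ m)
    -- K is a totally real algebraic extension of ℚ
    (K : Type*) [Field K] [CharZero K] [Algebra.IsAlgebraic ℚ K]
    (hK : ∀ σ : K →+* ℂ, ∀ x : K, (σ x).im = 0)
    -- O is an order in K
    (O : Subalgebra ℤ K)
    (hOfrac : ∀ x : K, ∃ a ∈ O, ∃ b ∈ O, b ≠ 0 ∧ x = a / b)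
    (f : MvPolynomial (Fin n) K) (hf : f.IsHomogeneous m)
    -- f is totally positive definite
    (hpd : ∀ σ : K →+* ℝ, ∀ x : Fin n → ℝ, x ≠ 0 → 0 < eval x (map σ f))
    (Λ : Submodule O (Fin n → K)) (hΛ : Λ.FG)
    (α : K)
    -- O⁺ has the Northcott property
    (hNorthcott : HasNorthcott {x : K | x ∈ O ∧ ∀ σ : K →+* ℂ, 0 < (σ x).re}) :
    {v : Fin n → K | v ∈ Λ ∧ eval v f = α}.Finite := by
  obtain ⟨C, hC⟩ := exists_forall_house'_apply_le_of_eval_eq hK f (by omega) hf hpd α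
  obtain ⟨d, hd0, hdΛ⟩ := exists_mul_mem_of_fg O hOfrac hΛ
  have hbox := (hNorthcott.of_totallyPositive hK O).finite_house'_le (house' d * C)
  refine (Set.Finite.pi fun _ : Fin n => hbox.image (d⁻¹ * ·)).subset ?_
  rintro v ⟨hvΛ, hvα⟩
  refine Set.mem_univ_pi.2 fun i => ⟨d * v i, ⟨hdΛ v hvΛ i, ?_⟩, inv_mul_cancel_left₀ hd0 _⟩
  exact (house'_mul_le d (v i)).trans (mul_le_mul_of_nonneg_left (hC v hvα i) (house'_nonneg d))

theorem finitely_many_representations_of_northcott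
    (n m : ℕ) (hn : 1 ≤ n) (hm : 2 ≤ m) (hme : Even m)
    -- K is a totally real algebraic extension of ℚ
    (K : Type*) [Field K] [CharZero K] [Algebra.IsAlgebraic ℚ K]
    (hK : ∀ σ : K →+* ℂ, ∀ x : K, (σ x).im = 0)
    -- O is an order in K
    (O : Subalgebra ℤ K)
    (hOint : ∀ x ∈ O, IsIntegral ℤ x)
    (hOfrac : ∀ x : K, ∃ a ∈ O, ∃ b ∈ O, b ≠ 0 ∧ x = a / b)
    (f : MvPolynomial (Fin n) K) (hf : f.IsHomogeneous m)
    -- f is totally positive definite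
    (hpd : ∀ σ : K →+* ℝ, ∀ x : Fin n → ℝ, x ≠ 0 → 0 < eval x (map σ f))
    (Λ : Submodule O (Fin n → K)) (hΛ : Λ.FG)
    -- f takes values in O on Λ
    (hfΛ : ∀ v ∈ Λ, eval v f ∈ O)
    (α : K) (hαO : α ∈ O)
    -- α is totally positive
    (hαpos : ∀ σ : K →+* ℂ, 0 < (σ α).re)
    -- O⁺ has the Northcott property
    (hNorthcott : HasNorthcott {x : K | x ∈ O ∧ ∀ σ : K →+* ℂ, 0 < (σ x).re}) :
    {v : Fin n → K | v ∈ Λ ∧ eval v f = α}.Finite :=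
  finitely_many_representations_of_northcott_general n m hm K hK O hOfrac f hf hpd Λ hΛ α hNorthcott
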